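/- For N = 2 and any m ≥ 1, the 2m+1 functions 𝓗, F⁺_{αα} (1 ≤ α ≤ m), and Q_α² + P_α² (1 ≤ α ≤ m) on (R^{2m})² pairwise Poisson-commute (on the open set z̃_1 ≠ z̃_2), and 2m+1 > mN = 2m, giving at least mN independent commuting integrals. -/

import Mathlib

/- STATEMENT 13: For N = 2 and any m ≥ 1, the 2m+1 functions 𝓗, F⁺_{αα}
(1 ≤ α ≤ m), and Q_α² + P_α² (1 ≤ α ≤ m) on (ℝ^{2m})² pairwise
Poisson-commute on the open set z̃_1 ≠ z̃_2, and 2m+1 > mN = 2m.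
Here 𝓗 = 2C Γ_1 Γ_2 |z̃_1 − z̃_2|^{2−2m} for m > 1 and
𝓗 = −(1/4π) Γ_1 Γ_2 ln|z̃_1 − z̃_2|² for m = 1. -/

noncomputable section

abbrev PV (N m : ℕ) : Type := (Fin N × Fin m × Bool) → ℝ

def pd {N m : ℕ} (f : PV N m → ℝ) (p : PV N m) (idx : Fin N × Fin m × Bool) : ℝ :=
  fderiv ℝ f p (Pi.single idx 1)

def pb {N m : ℕ} (Γ : Fin N → ℝ) (f g : PV N m → ℝ) (p : PV N m) : ℝ :=
  ∑ j, (Γ j)⁻¹ *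
    ∑ α, (pd f p (j, α, false) * pd g p (j, α, true) -
          pd f p (j, α, true) * pd g p (j, α, false))

def Qf {N m : ℕ} (Γ : Fin N → ℝ) (α : Fin m) : PV N m → ℝ :=
  fun p => ∑ j, Γ j * p (j, α, false)

def Pf {N m : ℕ} (Γ : Fin N → ℝ) (α : Fin m) : PV N m → ℝ :=
  fun p => ∑ j, Γ j * p (j, α, true)

def Ff {N m : ℕ} (Γ : Fin N → ℝ) (α : Fin m) : PV N m → ℝ :=
  fun p => ∑ j, Γ j * (p (j, α, false) ^ 2 + p (j, α, true) ^ 2)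

def QP {N m : ℕ} (Γ : Fin N → ℝ) (α : Fin m) : PV N m → ℝ :=
  fun p => (Qf Γ α p) ^ 2 + (Pf Γ α p) ^ 2

/-- |z̃_1 − z̃_2|² for the two-vortex configuration. -/
def dsq2 {m : ℕ} (p : PV 2 m) : ℝ :=
  ∑ i : Fin m × Bool, (p (0, i) - p (1, i)) ^ 2

/-- The two-vortex Hamiltonian (logarithmic for m = 1, power law for m > 1). -/
def H2 {m : ℕ} (C : ℝ) (Γ : Fin 2 → ℝ) : PV 2 m → ℝ :=
  fun p =>
    if m = 1 then -(1 / (4 * Real.pi)) * Γ 0 * Γ 1 * Real.log (dsq2 p)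
    else 2 * C * Γ 0 * Γ 1 * (Real.sqrt (dsq2 p)) ^ ((2 : ℤ) - 2 * m)

/-! The bracket with `P_α` (resp. `-Q_α`) differentiates along the common translation of all
vortices in the `x_α` (resp. `y_α`) direction, and the bracket with `F⁺_αα` along the common
rotation of the `α`-th plane. The Hamiltonian is a function of `|z̃_1 − z̃_2|²`, which is
invariant under both motions. `F⁺_ββ` is rotation invariant, and its translations produce
`2Q_β`, `2P_β`, which cancel in `{F⁺_ββ, Q_β² + P_β²}`; likewise the translations of
`Q_α² + P_α²`, proportional to `Q_α` and `P_α`, cancel in its brackets with `Q_β² + P_β²`. -/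

open Finset ContinuousLinearMap

section PoissonBracket

variable {N m : ℕ}

lemma pd_of_hasFDerivAt {f : PV N m → ℝ} {L : PV N m →L[ℝ] ℝ} {p : PV N m}
    (h : HasFDerivAt f L p) (i : Fin N × Fin m × Bool) : pd f p i = L (Pi.single i 1) := by
  rw [pd, h.fderiv]

lemma hasFDerivAt_coord (i : Fin N × Fin m × Bool) (p : PV N m) :
    HasFDerivAt (fun q : PV N m => q i) (proj i : PV N m →L[ℝ] ℝ) p :=
  hasFDerivAt_apply i p

lemma pd_comp {φ : ℝ → ℝ} {f : PV N m → ℝ} {p : PV N m} (hφ : DifferentiableAt ℝ φ (f p))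
    (hf : DifferentiableAt ℝ f p) (i : Fin N × Fin m × Bool) :
    pd (φ ∘ f) p i = deriv φ (f p) * pd f p i := by
  rw [pd_of_hasFDerivAt (hφ.hasDerivAt.comp_hasFDerivAt p hf.hasFDerivAt), pd]
  rfl

lemma hasFDerivAt_Qf (Γ : Fin N → ℝ) (α : Fin m) (p : PV N m) :
    HasFDerivAt (Qf Γ α) (∑ k, Γ k • (proj (k, α, false) : PV N m →L[ℝ] ℝ)) p :=
  HasFDerivAt.fun_sum fun k _ => (hasFDerivAt_coord _ p).const_mul (Γ k)

lemma hasFDerivAt_Pf (Γ : Fin N → ℝ) (α : Fin m) (p : PV N m) :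
    HasFDerivAt (Pf Γ α) (∑ k, Γ k • (proj (k, α, true) : PV N m →L[ℝ] ℝ)) p :=
  HasFDerivAt.fun_sum fun k _ => (hasFDerivAt_coord _ p).const_mul (Γ k)

lemma pd_Qf (Γ : Fin N → ℝ) (α : Fin m) (p : PV N m) (j : Fin N) (β : Fin m) (b : Bool) :
    pd (Qf Γ α) p (j, β, b) = if β = α ∧ b = false then Γ j else 0 := by
  rw [pd_of_hasFDerivAt (hasFDerivAt_Qf Γ α p)]
  simp [Pi.single_apply, eq_comm, ite_and]

lemma pd_Pf (Γ : Fin N → ℝ) (α : Fin m) (p : PV N m) (j : Fin N) (β : Fin m) (b : Bool) :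
    pd (Pf Γ α) p (j, β, b) = if β = α ∧ b = true then Γ j else 0 := by
  rw [pd_of_hasFDerivAt (hasFDerivAt_Pf Γ α p)]
  simp [Pi.single_apply, eq_comm, ite_and]

lemma pd_Ff (Γ : Fin N → ℝ) (α : Fin m) (p : PV N m) (j : Fin N) (β : Fin m) (b : Bool) :
    pd (Ff Γ α) p (j, β, b) = if β = α then 2 * Γ j * p (j, α, b) else 0 := by
  have h : HasFDerivAt (Ff Γ α) (∑ k, Γ k • ((2 * p (k, α, false)) • proj (k, α, false) +
      (2 * p (k, α, true)) • proj (k, α, true) : PV N m →L[ℝ] ℝ)) p := by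
    refine HasFDerivAt.fun_sum fun k _ => HasFDerivAt.const_mul
      (((hasFDerivAt_coord _ p).pow 2).add ((hasFDerivAt_coord _ p).pow 2)) (Γ k) |>.congr_fderiv ?_
    simp
  rw [pd_of_hasFDerivAt h]
  cases b <;> simp [Pi.single_apply, eq_comm, ite_and] <;> split_ifs <;> ring

lemma pd_QP (Γ : Fin N → ℝ) (α : Fin m) (p : PV N m) (i : Fin N × Fin m × Bool) :
    pd (QP Γ α) p i = 2 * Qf Γ α p * pd (Qf Γ α) p i + 2 * Pf Γ α p * pd (Pf Γ α) p i := by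
  have hQ := hasFDerivAt_Qf Γ α p
  have hP := hasFDerivAt_Pf Γ α p
  have h : HasFDerivAt (QP Γ α) _ p := (hQ.pow 2).add (hP.pow 2)
  rw [pd_of_hasFDerivAt h, pd_of_hasFDerivAt hQ, pd_of_hasFDerivAt hP]
  simp [mul_comm]

lemma pb_comp_left (Γ : Fin N → ℝ) {φ : ℝ → ℝ} {f : PV N m → ℝ} (g : PV N m → ℝ) {p : PV N m}
    (hφ : DifferentiableAt ℝ φ (f p)) (hf : DifferentiableAt ℝ f p) :
    pb Γ (φ ∘ f) g p = deriv φ (f p) * pb Γ f g p := by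
  simp only [pb, pd_comp hφ hf, mul_sum]
  refine sum_congr rfl fun j _ => sum_congr rfl fun α _ => by ring

lemma pb_eq_sum_of_pd_right_eq_zero (Γ : Fin N → ℝ) (f : PV N m → ℝ) {g : PV N m → ℝ}
    {p : PV N m} (α : Fin m) (hg : ∀ j β b, β ≠ α → pd g p (j, β, b) = 0) :
    pb Γ f g p = ∑ j, (Γ j)⁻¹ *
      (pd f p (j, α, false) * pd g p (j, α, true) - pd f p (j, α, true) * pd g p (j, α, false)) := by
  refine sum_congr rfl fun j _ => congrArg _ (sum_eq_single α (fun β _ hβ => ?_) (by simp))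
  rw [hg j β true hβ, hg j β false hβ]
  ring

lemma pb_Qf_right {Γ : Fin N → ℝ} (hΓ : ∀ j, Γ j ≠ 0) (f : PV N m → ℝ) (α : Fin m) (p : PV N m) :
    pb Γ f (Qf Γ α) p = -∑ j, pd f p (j, α, true) := by
  rw [pb_eq_sum_of_pd_right_eq_zero Γ f α fun j β b hβ => by simp [pd_Qf, hβ], ← sum_neg_distrib]
  refine sum_congr rfl fun j _ => ?_
  simp only [pd_Qf, and_self, if_true, if_false, Bool.true_eq_false, and_false, mul_zero, zero_sub]
  field_simp [hΓ j]

lemma pb_Pf_right {Γ : Fin N → ℝ} (hΓ : ∀ j, Γ j ≠ 0) (f : PV N m → ℝ) (α : Fin m) (p : PV N m) :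
    pb Γ f (Pf Γ α) p = ∑ j, pd f p (j, α, false) := by
  rw [pb_eq_sum_of_pd_right_eq_zero Γ f α fun j β b hβ => by simp [pd_Pf, hβ]]
  refine sum_congr rfl fun j _ => ?_
  simp only [pd_Pf, and_self, if_true, if_false, Bool.false_eq_true, and_false, mul_zero, sub_zero]
  field_simp [hΓ j]

lemma pb_Ff_right {Γ : Fin N → ℝ} (hΓ : ∀ j, Γ j ≠ 0) (f : PV N m → ℝ) (α : Fin m) (p : PV N m) :
    pb Γ f (Ff Γ α) p =
      2 * ∑ j, (pd f p (j, α, false) * p (j, α, true) - pd f p (j, α, true) * p (j, α, false)) := by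
  rw [pb_eq_sum_of_pd_right_eq_zero Γ f α fun j β b hβ => by simp [pd_Ff, hβ], mul_sum]
  refine sum_congr rfl fun j _ => ?_
  simp only [pd_Ff, if_true]
  field_simp [hΓ j]

lemma pb_QP_right {Γ : Fin N → ℝ} (hΓ : ∀ j, Γ j ≠ 0) (f : PV N m → ℝ) (α : Fin m) (p : PV N m) :
    pb Γ f (QP Γ α) p = 2 * Pf Γ α p * ∑ j, pd f p (j, α, false) -
      2 * Qf Γ α p * ∑ j, pd f p (j, α, true) := by
  have : pb Γ f (QP Γ α) p = 2 * Qf Γ α p * pb Γ f (Qf Γ α) p + 2 * Pf Γ α p * pb Γ f (Pf Γ α) p := by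
    simp only [pb, pd_QP, mul_sum, ← sum_add_distrib]
    refine sum_congr rfl fun j _ => sum_congr rfl fun α _ => by ring
  rw [this, pb_Qf_right hΓ, pb_Pf_right hΓ]
  ring

lemma pb_Ff_Ff {Γ : Fin N → ℝ} (hΓ : ∀ j, Γ j ≠ 0) (α β : Fin m) (p : PV N m) :
    pb Γ (Ff Γ α) (Ff Γ β) p = 0 := by
  rw [pb_Ff_right hΓ, sum_eq_zero fun j _ => ?_, mul_zero]
  simp only [pd_Ff]
  split_ifs with h
  · subst h; ring
  · ring

lemma pb_Ff_QP {Γ : Fin N → ℝ} (hΓ : ∀ j, Γ j ≠ 0) (α β : Fin m) (p : PV N m) :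
    pb Γ (Ff Γ α) (QP Γ β) p = 0 := by
  rw [pb_QP_right hΓ]
  simp only [pd_Ff]
  split_ifs with h
  · subst h
    simp only [Qf, Pf, mul_assoc, ← mul_sum]
    ring
  · simp

lemma pb_QP_QP {Γ : Fin N → ℝ} (hΓ : ∀ j, Γ j ≠ 0) (α β : Fin m) (p : PV N m) :
    pb Γ (QP Γ α) (QP Γ β) p = 0 := by
  rw [pb_QP_right hΓ]
  by_cases h : β = α
  · subst h
    simp [pd_QP, pd_Qf, pd_Pf, ← mul_sum]
    ring
  · simp [pd_QP, pd_Qf, pd_Pf, h]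

end PoissonBracket

section TwoVortex

variable {m : ℕ}

lemma dsq2_pos {p : PV 2 m} (hp : dsq2 p ≠ 0) : 0 < dsq2 p :=
  (sum_nonneg fun i _ => sq_nonneg (p (0, i) - p (1, i))).lt_of_ne' hp

lemma hasFDerivAt_dsq2 (p : PV 2 m) :
    HasFDerivAt dsq2 (∑ i, (2 * (p (0, i) - p (1, i))) •
      ((proj (0, i) : PV 2 m →L[ℝ] ℝ) - proj (1, i))) p := by
  refine HasFDerivAt.fun_sum fun i _ =>
    (((hasFDerivAt_coord (0, i) p).sub (hasFDerivAt_coord (1, i) p)).pow 2).congr_fderiv ?_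
  simp

lemma pd_dsq2_zero (p : PV 2 m) (i : Fin m × Bool) :
    pd dsq2 p (0, i) = 2 * (p (0, i) - p (1, i)) := by
  rw [pd_of_hasFDerivAt (hasFDerivAt_dsq2 p)]
  simp [Pi.single_apply]

lemma pd_dsq2_one (p : PV 2 m) (i : Fin m × Bool) :
    pd dsq2 p (1, i) = -(2 * (p (0, i) - p (1, i))) := by
  rw [pd_of_hasFDerivAt (hasFDerivAt_dsq2 p)]
  simp [Pi.single_apply]

lemma sum_pd_dsq2 (p : PV 2 m) (i : Fin m × Bool) : ∑ j, pd dsq2 p (j, i) = 0 := by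
  rw [Fin.sum_univ_two, pd_dsq2_zero, pd_dsq2_one, add_neg_cancel]

lemma pb_dsq2_Ff {Γ : Fin 2 → ℝ} (hΓ : ∀ j, Γ j ≠ 0) (α : Fin m) (p : PV 2 m) :
    pb Γ dsq2 (Ff Γ α) p = 0 := by
  rw [pb_Ff_right hΓ, Fin.sum_univ_two, pd_dsq2_zero, pd_dsq2_one, pd_dsq2_zero, pd_dsq2_one]
  ring

lemma pb_dsq2_QP {Γ : Fin 2 → ℝ} (hΓ : ∀ j, Γ j ≠ 0) (α : Fin m) (p : PV 2 m) :
    pb Γ dsq2 (QP Γ α) p = 0 := by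
  rw [pb_QP_right hΓ, sum_pd_dsq2, sum_pd_dsq2]
  ring

lemma pb_H2_eq_zero {Γ' : Fin 2 → ℝ} (C : ℝ) (Γ : Fin 2 → ℝ) {g : PV 2 m → ℝ} {p : PV 2 m}
    (hp : dsq2 p ≠ 0) (hg : pb Γ' dsq2 g p = 0) : pb Γ' (H2 C Γ) g p = 0 := by
  set φ : ℝ → ℝ := fun t => if m = 1 then -(1 / (4 * Real.pi)) * Γ 0 * Γ 1 * Real.log t
    else 2 * C * Γ 0 * Γ 1 * Real.sqrt t ^ ((2 : ℤ) - 2 * m)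
  have hφ : DifferentiableAt ℝ φ (dsq2 p) := by
    by_cases hm : m = 1
    · simp only [φ, hm, if_true]
      fun_prop (disch := exact hp)
    · simp only [φ, hm, if_false]
      fun_prop (disch := simp [Real.sqrt_ne_zero', dsq2_pos hp])
  have hdsq2 : DifferentiableAt ℝ dsq2 p := (hasFDerivAt_dsq2 p).differentiableAt
  rw [show H2 C Γ = φ ∘ dsq2 from rfl, pb_comp_left Γ' g hφ hdsq2, hg, mul_zero]

end TwoVortex

theorem two_vortex_integrability_general
    {m : ℕ} (C : ℝ) (Γ : Fin 2 → ℝ) (hΓ : ∀ j, Γ j ≠ 0) :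
    (∀ p : PV 2 m, dsq2 p ≠ 0 → ∀ α β : Fin m,
      pb Γ (H2 C Γ) (Ff Γ α) p = 0 ∧
      pb Γ (H2 C Γ) (QP Γ α) p = 0 ∧
      pb Γ (Ff Γ α) (Ff Γ β) p = 0 ∧
      pb Γ (QP Γ α) (QP Γ β) p = 0 ∧
      pb Γ (Ff Γ α) (QP Γ β) p = 0) ∧
    2 * m + 1 > m * 2 :=
  ⟨fun p hp α β => ⟨pb_H2_eq_zero C Γ hp (pb_dsq2_Ff hΓ α p),
    pb_H2_eq_zero C Γ hp (pb_dsq2_QP hΓ α p), pb_Ff_Ff hΓ α β p, pb_QP_QP hΓ α β p,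
    pb_Ff_QP hΓ α β p⟩, by omega⟩

theorem two_vortex_integrability
    {m : ℕ} (hm : 1 ≤ m) (C : ℝ) (Γ : Fin 2 → ℝ) (hΓ : ∀ j, Γ j ≠ 0) :
    (∀ p : PV 2 m, dsq2 p ≠ 0 → ∀ α β : Fin m,
      pb Γ (H2 C Γ) (Ff Γ α) p = 0 ∧
      pb Γ (H2 C Γ) (QP Γ α) p = 0 ∧
      pb Γ (Ff Γ α) (Ff Γ β) p = 0 ∧
      pb Γ (QP Γ α) (QP Γ β) p = 0 ∧
      pb Γ (Ff Γ α) (QP Γ β) p = 0) ∧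
    2 * m + 1 > m * 2 :=
  two_vortex_integrability_general C Γ hΓ

end
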